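/- arXiv:2210.06926 — 5 statements merged into one kernel-verified Lean document; each statement's English description precedes it below -/
import Mathlib

section
/- Let K_s be an object sampling of K. If X ⊆ M is a passkey in K_s, i.e., X is a key in K_s of minimum cardinality among all keys Y in K_s with Y'_{K_s} = X'_{K_s}, then X is a passkey in K. -/
def extentOf {G M : Type*} (I : G → M → Prop) (B : Set M) : Set G :=
  {g | ∀ m ∈ B, I g m}

/-- `X` is a key w.r.t. a derivation `ext`: no proper subset has the same
derived object set. -/
def IsKey {G M : Type*} (ext : Set M → Set G) (X : Set M) : Prop :=
  ∀ Y ⊂ X, ext Y ≠ ext X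

/-- `X` is a passkey: a key of minimum cardinality among all keys with the
same derived object set. -/
def IsPasskey {G M : Type*} (ext : Set M → Set G) (X : Set M) : Prop :=
  IsKey ext X ∧ ∀ Z : Set M, IsKey ext Z → ext Z = ext X → X.ncard ≤ Z.ncard

/-! Sampling objects can only merge extents: `Y' = X'` in `K` forces `Y' ∩ Gs = X' ∩ Gs`.
Hence a key of the sample is a key of `K`, and every competitor `Z` with `Z' = X'` in `K`
contains a key of the sample with the same sampled extent, which is no smaller than `X`. -/

section

variable {G G' M : Type*}

theorem IsKey.of_comp {ext : Set M → Set G} (f : Set G → Set G') {X : Set M}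
    (hX : IsKey (f ∘ ext) X) : IsKey ext X :=
  fun Y hYX hext => hX Y hYX (congrArg f hext)

theorem exists_isKey_subset_of_finite (ext : Set M → Set G) {Z : Set M} (hZ : Z.Finite) :
    ∃ Z₀ ⊆ Z, IsKey ext Z₀ ∧ ext Z₀ = ext Z := by
  set S : Set (Set M) := {W | W ⊆ Z ∧ ext W = ext Z}
  have hS : S.Finite := hZ.finite_subsets.subset fun W hW => hW.1
  obtain ⟨Z₀, -, ⟨hZ₀Z, hZ₀ext⟩, hmin⟩ := hS.exists_le_minimal (a := Z) ⟨subset_rfl, rfl⟩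
  refine ⟨Z₀, hZ₀Z, fun Y hYZ₀ hYext => ?_, hZ₀ext⟩
  exact hYZ₀.2 (hmin ⟨hYZ₀.1.trans hZ₀Z, hYext.trans hZ₀ext⟩ hYZ₀.1)

theorem IsPasskey.of_comp [Finite M] {ext : Set M → Set G} (f : Set G → Set G') {X : Set M}
    (hX : IsPasskey (f ∘ ext) X) : IsPasskey ext X := by
  refine ⟨hX.1.of_comp f, fun Z _ hZX => ?_⟩
  obtain ⟨Z₀, hZ₀Z, hZ₀key, hZ₀ext⟩ := exists_isKey_subset_of_finite (f ∘ ext) Z.toFinite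
  calc X.ncard ≤ Z₀.ncard := hX.2 Z₀ hZ₀key (hZ₀ext.trans (congrArg f hZX))
    _ ≤ Z.ncard := Set.ncard_le_ncard hZ₀Z

end

/-- If `X` is a passkey in an object sampling `K_s` (where
`Y'_{K_s} = Y'_K ∩ Gs`), then `X` is a passkey in the whole context `K`. -/
theorem passkey_in_sample_passkey_in_whole {G M : Type*} [Finite M]
    (I : G → M → Prop) (Gs : Set G) (X : Set M)
    (hpk_s : IsPasskey (fun Y => extentOf I Y ∩ Gs) X) :
    IsPasskey (fun Y => extentOf I Y) X :=
  hpk_s.of_comp (· ∩ Gs)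
end

section
/- If X ⊆ M is a Δ-key (a minimal element of its Δ-equivalence class under φ_Δ), then for every proper subset Y ⊂ X, |Y'| − |X'| ≥ Δ. (The converse fails in general.) -/
def DeltaClosed {G M : Type*} (I : G → M → Prop) (Δ : ℕ) (B : Set M) : Prop :=
  ∀ m ∉ B, (extentOf I B).ncard - (extentOf I (insert m B)).ncard ≥ Δ

/-- If `X` is a Δ-key, i.e. a minimal element of its Δ-equivalence class
under the Δ-closure operator `φ`, then every proper subset `Y ⊂ X` satisfies
`|Y'| − |X'| ≥ Δ`. -/
theorem deltaKey_support_drop {G M : Type*} [Finite G] [Finite M]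
    (I : G → M → Prop) (Δ : ℕ) (hΔ : 1 ≤ Δ)
    (φ : Set M → Set M)
    (hext : ∀ B, B ⊆ φ B)
    (hclosed : ∀ B, DeltaClosed I Δ (φ B))
    (hmin : ∀ B C, B ⊆ C → DeltaClosed I Δ C → φ B ⊆ C)
    (X : Set M) (hkey : ∀ Y ⊂ X, φ Y ≠ φ X) :
    ∀ Y ⊂ X, (extentOf I Y).ncard - (extentOf I X).ncard ≥ Δ := by
  intro Y hY
  by_contra h
  push_neg at h
  apply hkey Y hY
  have hYX : Y ⊆ X := hY.subset
  have hfin : ∀ s : Set G, s.Finite := fun s => s.toFinite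
  have hXφY : X ⊆ φ Y := by
    intro m hm
    by_contra hmn
    have hc := hclosed Y m hmn
    set P : Set G := {g | I g m} with hP
    have h2 : ∀ B : Set M, (extentOf I B).ncard - (extentOf I (insert m B)).ncard
        = (extentOf I B \ P).ncard := by
      intro B
      have e1 : extentOf I (insert m B) = extentOf I B ∩ P := by
        ext g; simp only [extentOf, Set.mem_setOf_eq, Set.mem_inter_iff, Set.mem_insert_iff, hP]
        constructor
        · intro hg; exact ⟨fun n hn => hg n (Or.inr hn), hg m (Or.inl rfl)⟩
        · rintro ⟨h1, h2⟩ n hn; rcases hn with rfl | hn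
          · exact h2
          · exact h1 n hn
      rw [e1, ← Set.ncard_diff Set.inter_subset_left (hfin _)]
      congr 1
      ext g; simp only [Set.mem_diff, Set.mem_inter_iff]; tauto
    have hsub : extentOf I (φ Y) ⊆ extentOf I Y := fun g hg n hn => hg n (hext Y hn)
    have h3 : (extentOf I (φ Y) \ P).ncard ≤ (extentOf I Y \ P).ncard :=
      Set.ncard_le_ncard (Set.diff_subset_diff_left hsub) ((hfin _).diff)
    have h4 : extentOf I X ⊆ extentOf I (insert m Y) := by
      intro g hg n hn
      rcases hn with rfl | hn
      · exact hg n hm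
      · exact hg n (hYX hn)
    have h5 : (extentOf I X).ncard ≤ (extentOf I (insert m Y)).ncard :=
      Set.ncard_le_ncard h4 (hfin _)
    have h6 := h2 Y
    have h7 := h2 (φ Y)
    omega
  exact le_antisymm (hmin Y (φ X) (fun a ha => hext X (hYX ha)) (hclosed X))
    (hmin X (φ Y) hXφY (hclosed Y))
end

section
/- There exists a formal context and an itemset X such that every proper subset Y ⊂ X satisfies |Y'| − |X'| ≥ Δ (with Δ = 2), but X is not a Δ-key. Concretely: take G = {g₁, g₂, g₃}, M = {m₁, m₂}, with g₁ having no attributes, g₂ having {m₁}, g₃ having {m₁, m₂}; then X = {m₂} satisfies the condition for Δ = 2 but is not a 2-key. -/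
/-- The incidence of the concrete counterexample context: `g₁` has no
attributes, `g₂` has `{m₁}`, `g₃` has `{m₁, m₂}`. -/
def ctxI : Fin 3 → Fin 2 → Prop := fun g m => (g = 1 ∧ m = 0) ∨ g = 2

/-! In the context `ctxI` the only 2-closed itemset is `M`: the attribute `m₁` is missing from a
single object, so adding it never removes two objects, and `{m₁}` is not 2-closed because adding
`m₂` shrinks its extent from `{g₂, g₃}` to `{g₃}`. Hence all itemsets, in particular `∅` and
`{m₂}`, have the same 2-closure `M`, while `|∅'| − |{m₂}'| = 3 − 1 = 2`. -/

section extentOf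

variable {G M : Type*} (I : G → M → Prop)

@[simp]
lemma extentOf_empty : extentOf I ∅ = Set.univ := by
  ext g; simp [extentOf]

lemma extentOf_insert_subset (m : M) (B : Set M) :
    extentOf I (insert m B) ⊆ extentOf I B :=
  fun _ hg m' hm' => hg m' (Set.mem_insert_of_mem m hm')

lemma extentOf_diff_extentOf_insert_subset (m : M) (B : Set M) :
    extentOf I B \ extentOf I (insert m B) ⊆ {g | ¬ I g m} := by
  rintro g ⟨hgB, hgmB⟩ hgm
  exact hgmB fun m' hm' => (Set.mem_insert_iff.mp hm').elim (· ▸ hgm) (hgB m')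

lemma DeltaClosed.mem_of_ncard_lt [Finite G] {Δ : ℕ} {B : Set M} (hB : DeltaClosed I Δ B)
    {m : M} (hm : {g | ¬ I g m}.ncard < Δ) : m ∈ B := by
  by_contra hmB
  have hdrop : (extentOf I B).ncard - (extentOf I (insert m B)).ncard ≤ {g | ¬ I g m}.ncard := by
    rw [← Set.ncard_sdiff (extentOf_insert_subset I m B)]
    exact Set.ncard_le_ncard (extentOf_diff_extentOf_insert_subset I m B)
  exact absurd (hB m hmB) (by omega)

end extentOf

lemma ctxI_extentOf_singleton_zero : extentOf ctxI {0} = {1, 2} := by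
  ext g; simp [extentOf, ctxI]

lemma ctxI_extentOf_singleton_one : extentOf ctxI {1} = {2} := by
  ext g; simp [extentOf, ctxI]

lemma ctxI_extentOf_pair : extentOf ctxI {1, 0} = {2} := by
  ext g; simp [extentOf, ctxI]; tauto

lemma ctxI_not_deltaClosed_singleton_zero : ¬ DeltaClosed ctxI 2 {0} := by
  intro h
  have hdrop := h 1 (by decide)
  rw [ctxI_extentOf_singleton_zero, ctxI_extentOf_pair, Set.ncard_pair (by decide),
    Set.ncard_singleton] at hdrop
  omega

lemma ctxI_eq_univ_of_deltaClosed {B : Set (Fin 2)} (hB : DeltaClosed ctxI 2 B) :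
    B = Set.univ := by
  have h0 : (0 : Fin 2) ∈ B := hB.mem_of_ncard_lt ctxI <| by
    rw [show {g | ¬ ctxI g 0} = {0} by ext g; fin_cases g <;> simp [ctxI], Set.ncard_singleton]
    omega
  have h1 : (1 : Fin 2) ∈ B := by
    by_contra h1
    have hB0 : B = {0} := by ext m; fin_cases m <;> simp [h0, h1]
    exact ctxI_not_deltaClosed_singleton_zero (hB0 ▸ hB)
  ext m; fin_cases m <;> simp [h0, h1]

/-- The converse of the necessary condition for Δ-keys fails: in the
concrete context above, `X = {m₂}` satisfies `|Y'| − |X'| ≥ 2` for every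
proper subset `Y ⊂ X`, yet `X` is not a 2-key: it is not minimal in its
2-equivalence class under any 2-closure operator `φ`. -/
theorem not_every_delta_free_is_delta_key :
    (∀ Y ⊂ ({1} : Set (Fin 2)),
        (extentOf ctxI Y).ncard - (extentOf ctxI ({1} : Set (Fin 2))).ncard ≥ 2) ∧
    (∀ φ : Set (Fin 2) → Set (Fin 2),
      (∀ B, B ⊆ φ B) →
      (∀ B, DeltaClosed ctxI 2 (φ B)) →
      (∀ B C, B ⊆ C → DeltaClosed ctxI 2 C → φ B ⊆ C) →
      ∃ Y ⊂ ({1} : Set (Fin 2)), φ Y = φ ({1} : Set (Fin 2))) := by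
  constructor
  · intro Y hY
    rw [Set.ssubset_singleton_iff.mp hY, extentOf_empty, ctxI_extentOf_singleton_one,
      Set.ncard_univ, Set.ncard_singleton]
    simp
  · intro φ _ hclosed _
    refine ⟨∅, Set.empty_ssubset.mpr (Set.singleton_nonempty 1), ?_⟩
    rw [ctxI_eq_univ_of_deltaClosed (hclosed ∅), ctxI_eq_univ_of_deltaClosed (hclosed {1})]
end

section
/- Let X ⊆ M be a key in the context K = (G, M, I) such that for every proper subset Y ⊂ X, |Y'| − |X'| ≥ δ (i.e., X is a δ-key / Δ_key(X) ≥ δ). Then for any subset G_s ⊆ G with |G \ G_s| < δ, X remains a key in the sampled context K_s = (G_s, M, I_s): for every proper subset Y ⊂ X, Y' ∩ G_s ≠ X' ∩ G_s. -/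
/-! Passing from `X` to a proper subset `Y` adds at least `δ` objects to the extent. If the
two extents agreed on `Gs`, all of these objects would lie outside `Gs`, and fewer than `δ`
objects do. -/

namespace Set

variable {α : Type*} {s t u : Set α}

theorem sdiff_subset_compl_of_inter_eq (h : t ∩ u = s ∩ u) : t \ s ⊆ uᶜ :=
  fun _ ⟨hxt, hxs⟩ hxu => hxs (h ▸ ⟨hxt, hxu⟩ : _ ∈ s ∩ u).1

theorem ncard_sub_ncard_le_ncard_compl_of_inter_eq (h : t ∩ u = s ∩ u)
    (hs : s.Finite := by toFinite_tac) (hu : uᶜ.Finite := by toFinite_tac) :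
    t.ncard - s.ncard ≤ uᶜ.ncard :=
  (le_ncard_sdiff s t hs).trans (ncard_le_ncard (sdiff_subset_compl_of_inter_eq h) hu)

end Set

theorem deltaKey_stable_under_sampling_general {G M : Type*} [Finite G]
    (I : G → M → Prop) (X : Set M) (δ : ℕ)
    (hδ : ∀ Y ⊂ X, (extentOf I Y).ncard - (extentOf I X).ncard ≥ δ)
    (Gs : Set G) (hGs : (Gsᶜ).ncard < δ) :
    ∀ Y ⊂ X, extentOf I Y ∩ Gs ≠ extentOf I X ∩ Gs := by
  intro Y hY heq
  have hgain := hδ Y hY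
  have hbound := Set.ncard_sub_ncard_le_ncard_compl_of_inter_eq heq
  omega

/-- If `X` is a key with `Δ_key(X) ≥ δ` (every proper subset loses at least
`δ` of support), then `X` remains a key after removing fewer than `δ`
objects. -/
theorem deltaKey_stable_under_sampling {G M : Type*} [Finite G]
    (I : G → M → Prop) (X : Set M) (δ : ℕ)
    (hkey : ∀ Y ⊂ X, extentOf I Y ≠ extentOf I X)
    (hδ : ∀ Y ⊂ X, (extentOf I Y).ncard - (extentOf I X).ncard ≥ δ)
    (Gs : Set G) (hGs : (Gsᶜ).ncard < δ) :
    ∀ Y ⊂ X, extentOf I Y ∩ Gs ≠ extentOf I X ∩ Gs :=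
  deltaKey_stable_under_sampling_general I X δ hδ Gs hGs
end

section
/- Let B ⊆ M be closed in K = (G, M, I) with Δ(B) ≥ δ, i.e., for every m ∈ M \ B, |B'| − |(B ∪ {m})'| ≥ δ. Then for any G_s ⊆ G with |G \ G_s| < δ, the set B remains closed in the sampled context K_s = (G_s, M, I_s). -/
def intentOf {G M : Type*} (I : G → M → Prop) (A : Set G) : Set M :=
  {m | ∀ g ∈ A, I g m}

/-!
Removing an attribute `m ∉ B` from the closure of `B` in the sample requires every sampled object
of `B'` to have `m`, so then `B' ∩ Gs ⊆ (B ∪ {m})'`. Δ-closedness says `B'` has at least `δ`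
objects outside `(B ∪ {m})'`; they would all have to be among the fewer than `δ` unsampled ones.
-/

theorem Set.ncard_le_ncard_inter_add_ncard_compl {α : Type*} [Finite α] (s t : Set α) :
    s.ncard ≤ (s ∩ t).ncard + tᶜ.ncard := by
  rw [← Set.ncard_inter_add_ncard_sdiff_eq_ncard s t]
  exact Nat.add_le_add_left (Set.ncard_le_ncard (Set.sdiff_subset_compl s t)) _

section Derivation

variable {G M : Type*} (I : G → M → Prop)

theorem subset_extentOf_iff_subset_intentOf {A : Set G} {B : Set M} :
    A ⊆ extentOf I B ↔ B ⊆ intentOf I A :=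
  ⟨fun h _ hm _ hg => h hg _ hm, fun h _ hg _ hm => h hm _ hg⟩

theorem subset_extentOf_insert_of_mem_intentOf {A : Set G} {B : Set M} {m : M}
    (hA : A ⊆ extentOf I B) (hm : m ∈ intentOf I A) : A ⊆ extentOf I (insert m B) :=
  (subset_extentOf_iff_subset_intentOf I).2 <|
    Set.insert_subset hm ((subset_extentOf_iff_subset_intentOf I).1 hA)

end Derivation

theorem deltaClosed_stable_under_sampling_general {G M : Type*} [Finite G]
    (I : G → M → Prop) (B : Set M) (δ : ℕ)
    (hδ : DeltaClosed I δ B)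
    (Gs : Set G) (hGs : (Gsᶜ).ncard < δ) :
    intentOf I (extentOf I B ∩ Gs) = B := by
  have hsample : extentOf I B ∩ Gs ⊆ extentOf I B := Set.inter_subset_left
  refine Set.Subset.antisymm (fun m hm => ?_)
    ((subset_extentOf_iff_subset_intentOf I).1 hsample)
  by_contra hmB
  have hcount := Set.ncard_le_ncard_inter_add_ncard_compl (extentOf I B) Gs
  have hinsert := Set.ncard_le_ncard (subset_extentOf_insert_of_mem_intentOf I hsample hm)
  have hgap := hδ m hmB
  omega

/-- If `B` is closed with `Δ(B) ≥ δ`, then `B` remains closed after removing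
fewer than `δ` objects (derivations in the sample: `B'_{K_s} = B' ∩ Gs`). -/
theorem deltaClosed_stable_under_sampling {G M : Type*} [Finite G]
    (I : G → M → Prop) (B : Set M) (δ : ℕ)
    (hclosed : intentOf I (extentOf I B) = B)
    (hδ : DeltaClosed I δ B)
    (Gs : Set G) (hGs : (Gsᶜ).ncard < δ) :
    intentOf I (extentOf I B ∩ Gs) = B :=
  deltaClosed_stable_under_sampling_general I B δ hδ Gs hGs
end
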